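/- Let k be a positive integer and let f : S_{π/k} → ℍ² be given by f(z) = z^k. Then for all x, y ∈ S_{π/k}: j_{ℍ²}(f(x), f(y)) ≤ k · j_{S_{π/k}}(x, y), and the constant k is best possible: for x = r·e^{iα}, y = e^{iα} with α ∈ (0, π/(2k)) fixed, the ratio j_{ℍ²}(f(x), f(y)) / j_{S_{π/k}}(x, y) tends to k as r → 0⁺. -/

import Mathlib

open Metric Real Filter Topology Set

/-- The distance ratio metric of a domain `G`:
`j_G(x,y) = log(1 + |x-y| / min(d(x,∂G), d(y,∂G)))`. -/
noncomputable def jdist {E : Type*} [PseudoMetricSpace E] (G : Set E) (x y : E) : ℝ :=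
  Real.log (1 + dist x y /
    min (Metric.infDist x (frontier G)) (Metric.infDist y (frontier G)))

/-!
Let `S = S_{π/k}`. Being an intersection of two half-planes, `S` has boundary distance
`d(z, ∂S) = |z| min(sin θ, sin(π/k - θ)) ≤ |z| sin(kθ)` at `z = |z| e^{iθ}`, so
`|z|^(k-1) d(z, ∂S) ≤ Im z^k = d(z^k, ∂ℍ²)`. If `|x| ≤ |y|` and `δ` is the smaller boundary
distance of `x, y` in `S`, then `|x^k - y^k| ≤ (|x| + |x - y|)^k - |x|^k`, and convexity of
`t ↦ t^k` turns this into `1 + |x^k - y^k| / min(Im x^k, Im y^k) ≤ (1 + |x - y| / δ)^k`.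

On the ray through `e^{iα}` both metrics are explicit: they equal `log(1 + (1 - t) / (t c))`
with `t = r^k` resp. `t = r`, which is `-log t + O(1)` as `t → 0⁺`, so their ratio tends to `k`.
-/

theorem infDist_frontier_eq_infDist_compl {E : Type*} [NormedAddCommGroup E] [NormedSpace ℝ E]
    [FiniteDimensional ℝ E] {s : Set E} {x : E} (hx : x ∈ s) (hs : s ≠ univ) :
    infDist x (frontier s) = infDist x sᶜ := by
  obtain ⟨p, hp, hxp⟩ := exists_mem_frontier_infDist_compl_eq_dist hx hs
  refine le_antisymm ((infDist_le_dist_of_mem hp).trans_eq hxp.symm) ?_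
  rw [← infDist_closure (s := sᶜ)]
  refine infDist_le_infDist_of_subset ?_ ⟨p, hp⟩
  rw [frontier_eq_closure_inter_closure]
  exact inter_subset_right

/-- For `‖u‖ = 1`, the upper half-plane rotated by `conj u`. -/
def halfPlane (u : ℂ) : Set ℂ := {z | 0 < (z * u).im}

section halfPlane

variable {u v z : ℂ}

theorem mem_halfPlane : z ∈ halfPlane u ↔ 0 < (z * u).im := Iff.rfl

theorem im_mul_le_dist_of_notMem_halfPlane (hu : ‖u‖ = 1) {w : ℂ} (hw : w ∉ halfPlane u) :
    (z * u).im ≤ dist z w := by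
  rw [mem_halfPlane, not_lt] at hw
  calc (z * u).im ≤ ((z - w) * u).im := by rw [sub_mul, Complex.sub_im]; linarith
    _ ≤ ‖(z - w) * u‖ := Complex.im_le_norm _
    _ = dist z w := by rw [norm_mul, hu, mul_one, Complex.dist_eq]

theorem exists_notMem_halfPlane_dist_eq (hu : ‖u‖ = 1) (z : ℂ) :
    ∃ p ∉ halfPlane u, dist z p = |(z * u).im| := by
  have hconj : (starRingEnd ℂ) u * u = 1 := by
    rw [mul_comm, Complex.mul_conj, Complex.normSq_eq_norm_sq, hu]; norm_num
  refine ⟨z - (z * u).im * Complex.I * (starRingEnd ℂ) u, ?_, ?_⟩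
  · rw [mem_halfPlane, sub_mul, mul_assoc _ (starRingEnd ℂ u), hconj, mul_one]
    simp
  · rw [Complex.dist_eq, sub_sub_cancel, norm_mul, norm_mul, Complex.norm_conj, hu,
      Complex.norm_I, Complex.norm_real, Real.norm_eq_abs, mul_one, mul_one]

theorem infDist_compl_halfPlane_inter (hu : ‖u‖ = 1) (hv : ‖v‖ = 1)
    (hz : z ∈ halfPlane u ∩ halfPlane v) :
    infDist z (halfPlane u ∩ halfPlane v)ᶜ = min (z * u).im (z * v).im := by
  obtain ⟨p, hp, hzp⟩ := exists_notMem_halfPlane_dist_eq hu z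
  obtain ⟨q, hq, hzq⟩ := exists_notMem_halfPlane_dist_eq hv z
  have hpc : p ∈ (halfPlane u ∩ halfPlane v)ᶜ := fun h ↦ hp h.1
  have hqc : q ∈ (halfPlane u ∩ halfPlane v)ᶜ := fun h ↦ hq h.2
  refine le_antisymm (le_min ?_ ?_) ((le_infDist ⟨p, hpc⟩).2 fun w hw ↦ ?_)
  · rw [← abs_of_pos (mem_halfPlane.1 hz.1), ← hzp]; exact infDist_le_dist_of_mem hpc
  · rw [← abs_of_pos (mem_halfPlane.1 hz.2), ← hzq]; exact infDist_le_dist_of_mem hqc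
  · rcases not_and_or.1 hw with hwu | hwv
    · exact (min_le_left _ _).trans (im_mul_le_dist_of_notMem_halfPlane hu hwu)
    · exact (min_le_right _ _).trans (im_mul_le_dist_of_notMem_halfPlane hv hwv)

theorem infDist_frontier_halfPlane_inter (hu : ‖u‖ = 1) (hv : ‖v‖ = 1)
    (hz : z ∈ halfPlane u ∩ halfPlane v) :
    infDist z (frontier (halfPlane u ∩ halfPlane v)) = min (z * u).im (z * v).im := by
  obtain ⟨p, hp, -⟩ := exists_notMem_halfPlane_dist_eq hu z
  rw [infDist_frontier_eq_infDist_compl hz ((ne_univ_iff_exists_notMem _).2 ⟨p, fun h ↦ hp h.1⟩),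
    infDist_compl_halfPlane_inter hu hv hz]

theorem infDist_frontier_halfPlane (hu : ‖u‖ = 1) (hz : z ∈ halfPlane u) :
    infDist z (frontier (halfPlane u)) = (z * u).im := by
  simpa using infDist_frontier_halfPlane_inter hu hu ⟨hz, hz⟩

end halfPlane

theorem infDist_frontier_upperHalfPlane {z : ℂ} (hz : 0 < z.im) :
    infDist z (frontier {w : ℂ | 0 < w.im}) = z.im := by
  simpa [halfPlane] using infDist_frontier_halfPlane (u := 1) (by simp) (by simpa [halfPlane])

def sector (φ : ℝ) : Set ℂ := {z | 0 < Complex.arg z ∧ Complex.arg z < φ}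

theorem im_mul_neg_exp_neg (z : ℂ) (φ : ℝ) :
    (z * -Complex.exp (-(φ * Complex.I))).im = ‖z‖ * sin (φ - Complex.arg z) := by
  have hre := Complex.norm_mul_cos_arg z
  have him := Complex.norm_mul_sin_arg z
  simp only [mul_neg, Complex.neg_im, Complex.mul_im, Complex.exp_im, Complex.neg_re,
    Complex.mul_re, Complex.ofReal_re, Complex.I_re, mul_zero, Complex.ofReal_im, Complex.I_im,
    mul_one, sub_self, neg_zero, exp_zero, add_zero, sin_neg, one_mul, Complex.exp_re, cos_neg,
    neg_add_rev, neg_neg, sin_sub]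
  linear_combination cos φ * him - sin φ * hre

theorem norm_neg_exp_neg_mul_I (φ : ℝ) : ‖-Complex.exp (-(φ * Complex.I))‖ = 1 := by
  rw [norm_neg, Complex.norm_exp]; simp

section sector

variable {φ : ℝ} {z : ℂ}

theorem sector_eq_halfPlane_inter (h0 : 0 ≤ φ) (hπ : φ ≤ π) :
    sector φ = halfPlane 1 ∩ halfPlane (-Complex.exp (-(φ * Complex.I))) := by
  ext z
  rw [mem_inter_iff, mem_halfPlane, mem_halfPlane, mul_one, im_mul_neg_exp_neg,
    ← Complex.norm_mul_sin_arg]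
  have harg := Complex.neg_pi_lt_arg z
  have harg' := Complex.arg_le_pi z
  constructor
  · rintro ⟨h1, h2⟩
    have hz : 0 < ‖z‖ := norm_pos_iff.2 fun h ↦ by simp [h] at h1
    exact ⟨mul_pos hz (sin_pos_of_pos_of_lt_pi h1 (by linarith)),
      mul_pos hz (sin_pos_of_pos_of_lt_pi (by linarith) (by linarith))⟩
  · rintro ⟨h1, h2⟩
    constructor
    · by_contra! h
      have := sin_nonpos_of_nonpos_of_neg_pi_le h harg.le
      nlinarith [norm_nonneg z]
    · by_contra! h
      have := sin_nonpos_of_nonpos_of_neg_pi_le (sub_nonpos.2 h) (by linarith)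
      nlinarith [norm_nonneg z]

theorem infDist_frontier_sector (hπ : φ ≤ π) (hz : z ∈ sector φ) :
    infDist z (frontier (sector φ)) =
      ‖z‖ * min (sin (Complex.arg z)) (sin (φ - Complex.arg z)) := by
  have h0 : 0 ≤ φ := (hz.1.trans hz.2).le
  rw [sector_eq_halfPlane_inter h0 hπ] at hz ⊢
  rw [infDist_frontier_halfPlane_inter (by simp) (norm_neg_exp_neg_mul_I φ) hz, mul_one,
    im_mul_neg_exp_neg, ← Complex.norm_mul_sin_arg, mul_min_of_nonneg _ _ (norm_nonneg z)]

theorem infDist_frontier_sector_pos (hπ : φ ≤ π) (hz : z ∈ sector φ) :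
    0 < infDist z (frontier (sector φ)) := by
  have h0 : 0 ≤ φ := (hz.1.trans hz.2).le
  rw [sector_eq_halfPlane_inter h0 hπ] at hz ⊢
  rw [infDist_frontier_halfPlane_inter (by simp) (norm_neg_exp_neg_mul_I φ) hz]
  exact lt_min hz.1 hz.2

end sector

theorem norm_add_pow_sub_pow_le {R : Type*} [NormedRing R] [NormOneClass R] (x h : R) (k : ℕ) :
    ‖(x + h) ^ k - x ^ k‖ ≤ (‖x‖ + ‖h‖) ^ k - ‖x‖ ^ k := by
  induction k with
  | zero => simp
  | succ k ih =>
    calc ‖(x + h) ^ (k + 1) - x ^ (k + 1)‖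
        = ‖(x + h) * ((x + h) ^ k - x ^ k) + h * x ^ k‖ := by
          rw [pow_succ', pow_succ']; noncomm_ring
      _ ≤ (‖x‖ + ‖h‖) * ((‖x‖ + ‖h‖) ^ k - ‖x‖ ^ k) + ‖h‖ * ‖x‖ ^ k := by
          refine (norm_add_le _ _).trans (add_le_add ?_ ?_)
          · exact (norm_mul_le _ _).trans (mul_le_mul (norm_add_le x h) ih (norm_nonneg _)
              (by positivity))
          · exact (norm_mul_le _ _).trans
              (mul_le_mul_of_nonneg_left (norm_pow_le x k) (norm_nonneg h))
      _ = (‖x‖ + ‖h‖) ^ (k + 1) - ‖x‖ ^ (k + 1) := by ring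

theorem mul_add_pow_sub_pow_le {a δ d : ℝ} (hδ : 0 < δ) (hδa : δ ≤ a) (hd : 0 ≤ d) (k : ℕ) :
    a * ((a + d) ^ k - a ^ k) ≤ a ^ k * δ * ((1 + d / δ) ^ k - 1) := by
  have ha : 0 < a := hδ.trans_le hδa
  have hw : δ / a ∈ Icc (0 : ℝ) 1 := ⟨by positivity, (div_le_one ha).2 hδa⟩
  have hconv := (convexOn_pow k).2 (mem_Ici.2 zero_le_one) (mem_Ici.2 (by positivity : (0 : ℝ) ≤ 1 + d / δ))
    (sub_nonneg.2 hw.2) hw.1 (sub_add_cancel 1 (δ / a))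
  have hpoint : 1 - δ / a + δ / a * (1 + d / δ) = 1 + d / a := by field_simp; ring
  have hpow : (1 + d / a) ^ k ≤ 1 - δ / a + δ / a * (1 + d / δ) ^ k := by
    simpa only [smul_eq_mul, one_pow, mul_one, hpoint] using hconv
  have hak : (a + d) ^ k = a ^ k * (1 + d / a) ^ k := by
    rw [← mul_pow]; congr 1; field_simp
  rw [hak]
  calc a * (a ^ k * (1 + d / a) ^ k - a ^ k) = a * a ^ k * ((1 + d / a) ^ k - 1) := by ring
    _ ≤ a * a ^ k * (δ / a * ((1 + d / δ) ^ k - 1)) := by gcongr; linarith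
    _ = a ^ k * δ * ((1 + d / δ) ^ k - 1) := by field_simp

theorem one_add_div_le_one_add_div_pow {a δ d m D : ℝ} {k : ℕ} (hδ : 0 < δ) (hδa : δ ≤ a)
    (hd : 0 ≤ d) (hm : 0 < m) (hδm : a ^ k * δ ≤ a * m) (hD : D ≤ (a + d) ^ k - a ^ k) :
    1 + D / m ≤ (1 + d / δ) ^ k := by
  have ha : 0 < a := hδ.trans_le hδa
  have hgrowth : 0 ≤ (1 + d / δ) ^ k - 1 :=
    sub_nonneg.2 (one_le_pow₀ (le_add_of_nonneg_right (by positivity)))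
  rw [← le_sub_iff_add_le', div_le_iff₀ hm]
  refine le_of_mul_le_mul_left ?_ ha
  calc a * D ≤ a * ((a + d) ^ k - a ^ k) := by gcongr
    _ ≤ a ^ k * δ * ((1 + d / δ) ^ k - 1) := mul_add_pow_sub_pow_le hδ hδa hd k
    _ ≤ a * m * ((1 + d / δ) ^ k - 1) := by gcongr
    _ = a * (((1 + d / δ) ^ k - 1) * m) := by ring

theorem sin_le_sin_nat_mul {k : ℕ} (hk : 0 < k) {θ : ℝ} (h0 : 0 ≤ θ) (h : k * θ ≤ π / 2) :
    sin θ ≤ sin (k * θ) :=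
  sin_le_sin_of_le_of_le_pi_div_two (by linarith [pi_pos]) h
    (le_mul_of_one_le_left h0 (by exact_mod_cast hk))

theorem min_sin_le_sin_nat_mul {k : ℕ} (hk : 0 < k) {θ : ℝ} (h0 : 0 < θ) (h : θ < π / k) :
    min (sin θ) (sin (π / k - θ)) ≤ sin (k * θ) := by
  have hkπ : (k : ℝ) * (π / k) = π := mul_div_cancel₀ _ (by positivity)
  rcases le_total (k * θ) (π / 2) with hθ | hθ
  · exact (min_le_left _ _).trans (sin_le_sin_nat_mul hk h0.le hθ)
  · refine (min_le_right _ _).trans ((sin_le_sin_nat_mul hk (by linarith) ?_).trans_eq ?_)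
    · rw [mul_sub, hkπ]; linarith
    · rw [mul_sub, hkπ, sin_pi_sub]

theorem exp_mul_I_pow (θ : ℝ) (k : ℕ) :
    Complex.exp (θ * Complex.I) ^ k = Complex.exp ((k * θ : ℝ) * Complex.I) := by
  rw [← Complex.exp_nat_mul]
  push_cast
  ring_nf

theorem ofReal_mul_exp_mul_I_pow (r θ : ℝ) (k : ℕ) :
    ((r : ℂ) * Complex.exp (θ * Complex.I)) ^ k =
      ((r ^ k : ℝ) : ℂ) * Complex.exp ((k * θ : ℝ) * Complex.I) := by
  rw [mul_pow, exp_mul_I_pow, Complex.ofReal_pow]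

theorem im_pow_eq_norm_pow_mul_sin (z : ℂ) (k : ℕ) :
    (z ^ k).im = ‖z‖ ^ k * sin (k * Complex.arg z) := by
  conv_lhs => rw [← Complex.norm_mul_exp_arg_mul_I z]
  rw [ofReal_mul_exp_mul_I_pow, Complex.im_ofReal_mul, Complex.exp_ofReal_mul_I_im]

theorem sin_nat_mul_arg_pos {k : ℕ} (hk : 0 < k) {z : ℂ} (hz : z ∈ sector (π / k)) :
    0 < sin (k * Complex.arg z) := by
  have hk' : (0 : ℝ) < k := by exact_mod_cast hk
  refine sin_pos_of_pos_of_lt_pi (mul_pos hk' hz.1) ?_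
  calc k * Complex.arg z < k * (π / k) := by gcongr; exact hz.2
    _ = π := mul_div_cancel₀ _ hk'.ne'

theorem im_pow_pos {k : ℕ} (hk : 0 < k) {z : ℂ} (hz : z ∈ sector (π / k)) : 0 < (z ^ k).im := by
  have hz0 : z ≠ 0 := by rintro rfl; simp [sector] at hz
  rw [im_pow_eq_norm_pow_mul_sin]
  exact mul_pos (pow_pos (norm_pos_iff.2 hz0) k) (sin_nat_mul_arg_pos hk hz)

theorem pow_mul_infDist_frontier_sector_le {k : ℕ} (hk : 0 < k) {z : ℂ} (hz : z ∈ sector (π / k))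
    {ρ : ℝ} (hρ : 0 ≤ ρ) (hρz : ρ ≤ ‖z‖) :
    ρ ^ k * infDist z (frontier (sector (π / k))) ≤ ρ * (z ^ k).im := by
  have hd : infDist z (frontier (sector (π / k))) ≤ ‖z‖ * sin (k * Complex.arg z) := by
    rw [infDist_frontier_sector (div_le_self pi_pos.le (by exact_mod_cast hk)) hz]
    gcongr
    exact min_sin_le_sin_nat_mul hk hz.1 hz.2
  have hsin := (sin_nat_mul_arg_pos hk hz).le
  obtain ⟨n, rfl⟩ : ∃ n, k = n + 1 := ⟨k - 1, by omega⟩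
  rw [im_pow_eq_norm_pow_mul_sin]
  calc ρ ^ (n + 1) * infDist z (frontier (sector (π / ↑(n + 1))))
      ≤ ρ * ρ ^ n * (‖z‖ * sin (↑(n + 1) * Complex.arg z)) := by
        rw [pow_succ']; gcongr
    _ ≤ ρ * ‖z‖ ^ n * (‖z‖ * sin (↑(n + 1) * Complex.arg z)) := by gcongr
    _ = ρ * (‖z‖ ^ (n + 1) * sin (↑(n + 1) * Complex.arg z)) := by ring

theorem jdist_comm {E : Type*} [PseudoMetricSpace E] (G : Set E) (x y : E) :
    jdist G x y = jdist G y x := by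
  rw [jdist, jdist, dist_comm, min_comm]

theorem jdist_pow_le_of_norm_le {k : ℕ} (hk : 0 < k) {x y : ℂ} (hx : x ∈ sector (π / k))
    (hy : y ∈ sector (π / k)) (hxy : ‖x‖ ≤ ‖y‖) :
    jdist {z : ℂ | 0 < z.im} (x ^ k) (y ^ k) ≤ k * jdist (sector (π / k)) x y := by
  have hπ : π / k ≤ π := div_le_self pi_pos.le (by exact_mod_cast hk)
  set δ := min (infDist x (frontier (sector (π / k)))) (infDist y (frontier (sector (π / k))))
  set m := min (x ^ k).im (y ^ k).im
  set d := dist x y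
  have hδ : 0 < δ :=
    lt_min (infDist_frontier_sector_pos hπ hx) (infDist_frontier_sector_pos hπ hy)
  have hδx : δ ≤ ‖x‖ := by
    refine (min_le_left _ _).trans ?_
    rw [infDist_frontier_sector hπ hx]
    exact mul_le_of_le_one_right (norm_nonneg x) ((min_le_left _ _).trans (sin_le_one _))
  have hx0 : 0 < ‖x‖ := hδ.trans_le hδx
  have hm : 0 < m := lt_min (im_pow_pos hk hx) (im_pow_pos hk hy)
  have hδm : ‖x‖ ^ k * δ ≤ ‖x‖ * m := by
    rw [mul_min_of_nonneg _ _ hx0.le]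
    exact le_min
      ((mul_le_mul_of_nonneg_left (min_le_left _ _) (by positivity)).trans
        (pow_mul_infDist_frontier_sector_le hk hx hx0.le le_rfl))
      ((mul_le_mul_of_nonneg_left (min_le_right _ _) (by positivity)).trans
        (pow_mul_infDist_frontier_sector_le hk hy hx0.le hxy))
  have hnum : dist (x ^ k) (y ^ k) ≤ (‖x‖ + d) ^ k - ‖x‖ ^ k := by
    simpa [← dist_eq_norm, dist_comm] using norm_add_pow_sub_pow_le x (y - x) k
  have key : 1 + dist (x ^ k) (y ^ k) / m ≤ (1 + d / δ) ^ k :=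
    one_add_div_le_one_add_div_pow hδ hδx dist_nonneg hm hδm hnum
  rw [jdist, jdist, infDist_frontier_upperHalfPlane (im_pow_pos hk hx),
    infDist_frontier_upperHalfPlane (im_pow_pos hk hy), ← log_pow]
  exact log_le_log (by positivity) key

theorem jdist_pow_le {k : ℕ} (hk : 0 < k) {x y : ℂ} (hx : x ∈ sector (π / k))
    (hy : y ∈ sector (π / k)) :
    jdist {z : ℂ | 0 < z.im} (x ^ k) (y ^ k) ≤ k * jdist (sector (π / k)) x y := by
  rcases le_total ‖x‖ ‖y‖ with hxy | hyx
  · exact jdist_pow_le_of_norm_le hk hx hy hxy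
  · rw [jdist_comm, jdist_comm (sector _)]
    exact jdist_pow_le_of_norm_le hk hy hx hyx

theorem sin_le_sin_of_le_of_le_pi_sub {α β : ℝ} (hα : -(π / 2) ≤ α) (hαβ : α ≤ β)
    (hβ : β ≤ π - α) : sin α ≤ sin β := by
  rcases le_total β (π / 2) with hβ2 | hβ2
  · exact sin_le_sin_of_le_of_le_pi_div_two hα hβ2 hαβ
  · rw [← sin_pi_sub β]
    exact sin_le_sin_of_le_of_le_pi_div_two hα (by linarith) (by linarith)

theorem infDist_frontier_sector_ofReal_mul_exp {k : ℕ} (hk : 0 < k) {α t : ℝ} (hα0 : 0 < α)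
    (hα : α < π / (2 * k)) (ht : 0 < t) :
    infDist ((t : ℂ) * Complex.exp (α * Complex.I)) (frontier (sector (π / k))) =
      t * sin α := by
  have hk' : (1 : ℝ) ≤ k := by exact_mod_cast hk
  have hπk : π / k = 2 * (π / (2 * k)) := by field_simp
  have hπk' : π / k ≤ π := div_le_self pi_pos.le hk'
  have harg : Complex.arg ((t : ℂ) * Complex.exp (α * Complex.I)) = α := by
    rw [Complex.arg_real_mul _ ht, Complex.arg_exp_mul_I, toIocMod_eq_self]
    constructor <;> linarith
  have hnorm : ‖(t : ℂ) * Complex.exp (α * Complex.I)‖ = t := by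
    rw [norm_mul, Complex.norm_exp_ofReal_mul_I, mul_one, Complex.norm_real, norm_of_nonneg ht.le]
  have hmem : (t : ℂ) * Complex.exp (α * Complex.I) ∈ sector (π / k) := by
    change 0 < Complex.arg _ ∧ Complex.arg _ < π / k
    rw [harg]
    constructor <;> linarith
  rw [infDist_frontier_sector hπk' hmem, hnorm, harg, min_eq_left]
  exact sin_le_sin_of_le_of_le_pi_sub (by linarith [pi_pos]) (by linarith) (by linarith)

theorem jdist_ofReal_mul_exp_mul_I {G : Set ℂ} {t θ c : ℝ} (ht1 : t ≤ 1)
    (hc : 0 ≤ c) (hx : infDist ((t : ℂ) * Complex.exp (θ * Complex.I)) (frontier G) = t * c)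
    (hy : infDist (Complex.exp (θ * Complex.I)) (frontier G) = c) :
    jdist G ((t : ℂ) * Complex.exp (θ * Complex.I)) (Complex.exp (θ * Complex.I)) =
      log (1 + (1 - t) / (t * c)) := by
  have hdist : dist ((t : ℂ) * Complex.exp (θ * Complex.I)) (Complex.exp (θ * Complex.I)) =
      1 - t := by
    rw [Complex.dist_eq, ← sub_one_mul, norm_mul, Complex.norm_exp_ofReal_mul_I, mul_one,
      ← Complex.ofReal_one, ← Complex.ofReal_sub, Complex.norm_real, norm_of_nonpos (by linarith),
      neg_sub]
  rw [jdist, hx, hy, min_eq_left (mul_le_of_le_one_left hc ht1), hdist]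

theorem jdist_upperHalfPlane_ofReal_mul_exp {t θ : ℝ} (ht0 : 0 < t) (ht1 : t ≤ 1)
    (hθ : 0 < sin θ) :
    jdist {z : ℂ | 0 < z.im} ((t : ℂ) * Complex.exp (θ * Complex.I)) (Complex.exp (θ * Complex.I)) =
      log (1 + (1 - t) / (t * sin θ)) := by
  have him : ((t : ℂ) * Complex.exp (θ * Complex.I)).im = t * sin θ := by
    rw [Complex.im_ofReal_mul, Complex.exp_ofReal_mul_I_im]
  refine jdist_ofReal_mul_exp_mul_I ht1 hθ.le ?_ ?_
  · rw [infDist_frontier_upperHalfPlane (by rw [him]; positivity), him]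
  · rw [infDist_frontier_upperHalfPlane (by rwa [Complex.exp_ofReal_mul_I_im]),
      Complex.exp_ofReal_mul_I_im]

theorem jdist_sector_ofReal_mul_exp {k : ℕ} (hk : 0 < k) {α t : ℝ} (hα0 : 0 < α)
    (hα : α < π / (2 * k)) (ht0 : 0 < t) (ht1 : t ≤ 1) :
    jdist (sector (π / k)) ((t : ℂ) * Complex.exp (α * Complex.I)) (Complex.exp (α * Complex.I)) =
      log (1 + (1 - t) / (t * sin α)) := by
  refine jdist_ofReal_mul_exp_mul_I ht1 ?_ (infDist_frontier_sector_ofReal_mul_exp hk hα0 hα ht0) ?_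
  · have hk' : (1 : ℝ) ≤ k := by exact_mod_cast hk
    have : π / (2 * k) ≤ π := div_le_self pi_pos.le (by linarith)
    exact sin_nonneg_of_nonneg_of_le_pi hα0.le (by linarith)
  · simpa using infDist_frontier_sector_ofReal_mul_exp hk hα0 hα one_pos

theorem tendsto_mul_add_div_add {ι : Type*} {l : Filter ι} {L A B : ι → ℝ} {a b : ℝ} (c : ℝ)
    (hL : Tendsto L l atTop) (hA : Tendsto A l (𝓝 a)) (hB : Tendsto B l (𝓝 b)) :
    Tendsto (fun t ↦ (c * L t + A t) / (L t + B t)) l (𝓝 c) := by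
  have hinv := hL.inv_tendsto_atTop
  have h := ((tendsto_const_nhds (x := c)).add (hA.mul hinv)).div
    ((tendsto_const_nhds (x := (1 : ℝ))).add (hB.mul hinv)) (by simp)
  rw [mul_zero, mul_zero, add_zero, add_zero, div_one] at h
  refine h.congr' ?_
  filter_upwards [hL.eventually_gt_atTop 0] with t ht
  change (c + A t * (L t)⁻¹) / (1 + B t * (L t)⁻¹) = _
  field_simp

theorem tendsto_log_one_add_div_add_log {c : ℝ} (hc : 0 < c) :
    Tendsto (fun t ↦ log (1 + (1 - t) / (t * c)) + log t) (𝓝[>] 0) (𝓝 (log c⁻¹)) := by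
  have hcont : Tendsto (fun t : ℝ ↦ t + (1 - t) / c) (𝓝 0) (𝓝 c⁻¹) :=
    (by fun_prop : Continuous fun t : ℝ ↦ t + (1 - t) / c).tendsto' 0 c⁻¹ (by simp)
  refine ((hcont.log (inv_ne_zero hc.ne')).mono_left nhdsWithin_le_nhds).congr' ?_
  filter_upwards [Ioo_mem_nhdsGT one_pos] with t ⟨ht0, ht1⟩
  have : 0 < 1 - t := by linarith
  rw [← log_mul (by positivity) ht0.ne']
  congr 1
  field_simp

theorem tendsto_jdist_pow_div_jdist {k : ℕ} (hk : 0 < k) {α : ℝ} (hα0 : 0 < α)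
    (hα : α < π / (2 * k)) :
    Tendsto (fun r : ℝ ↦
        jdist {z : ℂ | 0 < z.im} (((r : ℂ) * Complex.exp (α * Complex.I)) ^ k)
            (Complex.exp (α * Complex.I) ^ k) /
          jdist (sector (π / k)) ((r : ℂ) * Complex.exp (α * Complex.I))
            (Complex.exp (α * Complex.I)))
      (𝓝[>] 0) (𝓝 k) := by
  have hk' : (0 : ℝ) < k := by exact_mod_cast hk
  have hkα : k * α < π / 2 := by
    calc k * α < k * (π / (2 * k)) := by gcongr
      _ = π / 2 := by field_simp
  have hsin_kα : 0 < sin (k * α) := sin_pos_of_pos_of_lt_pi (by positivity) (by linarith [pi_pos])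
  have hα_le : α ≤ k * α := le_mul_of_one_le_left hα0.le (by exact_mod_cast hk)
  have hsin_α : 0 < sin α := sin_pos_of_pos_of_lt_pi hα0 (by linarith [pi_pos])
  have hpow : Tendsto (fun r : ℝ ↦ r ^ k) (𝓝[>] 0) (𝓝[>] 0) := by
    refine tendsto_nhdsWithin_iff.2 ⟨?_, ?_⟩
    · simpa [zero_pow hk.ne'] using ((continuous_pow k).tendsto (0 : ℝ)).mono_left
        nhdsWithin_le_nhds
    · filter_upwards [self_mem_nhdsWithin] with r hr using pow_pos (mem_Ioi.1 hr) k
  have hlim := tendsto_mul_add_div_add k (tendsto_neg_atBot_atTop.comp tendsto_log_nhdsGT_zero)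
    ((tendsto_log_one_add_div_add_log hsin_kα).comp hpow) (tendsto_log_one_add_div_add_log hsin_α)
  refine hlim.congr' ?_
  filter_upwards [Ioo_mem_nhdsGT one_pos] with r ⟨hr0, hr1⟩
  rw [exp_mul_I_pow, ofReal_mul_exp_mul_I_pow,
    jdist_upperHalfPlane_ofReal_mul_exp (by positivity) (pow_le_one₀ hr0.le hr1.le) hsin_kα,
    jdist_sector_ofReal_mul_exp hk hα0 hα hr0 hr1.le]
  simp only [Function.comp_apply, log_pow]
  ring

/-- For the power map `f(z) = z^k` from the sector `S_{π/k}` to the upper half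
plane, `j_{ℍ²}(f x, f y) ≤ k j_{S_{π/k}}(x, y)`, and the constant `k` is best
possible: for `x = r e^{iα}`, `y = e^{iα}` with `α ∈ (0, π/(2k))` fixed, the
ratio tends to `k` as `r → 0⁺`. -/
theorem power_map_jdist_lipschitz_sharp (k : ℕ) (hk : 0 < k) :
    (∀ x ∈ {z : ℂ | 0 < Complex.arg z ∧ Complex.arg z < π / k},
      ∀ y ∈ {z : ℂ | 0 < Complex.arg z ∧ Complex.arg z < π / k},
        jdist {z : ℂ | 0 < z.im} (x ^ k) (y ^ k) ≤
          k * jdist {z : ℂ | 0 < Complex.arg z ∧ Complex.arg z < π / k} x y) ∧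
      ∀ α : ℝ, 0 < α → α < π / (2 * k) →
        Tendsto (fun r : ℝ =>
            jdist {z : ℂ | 0 < z.im}
                (((r : ℂ) * Complex.exp (α * Complex.I)) ^ k)
                ((Complex.exp (α * Complex.I)) ^ k) /
              jdist {z : ℂ | 0 < Complex.arg z ∧ Complex.arg z < π / k}
                ((r : ℂ) * Complex.exp (α * Complex.I)) (Complex.exp (α * Complex.I)))
          (𝓝[>] 0) (𝓝 k) :=
  ⟨fun _ hx _ hy ↦ jdist_pow_le hk hx hy, fun _ hα0 hα ↦ tendsto_jdist_pow_div_jdist hk hα0 hα⟩
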